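/- arXiv:1303.3194 — 4 statements merged into one kernel-verified Lean document; each statement's English description precedes it below -/
import Mathlib

section
/- Let μ be a probability measure on a finite set Y, and L : Y → ℝ a positive function (the likelihood ratio) satisfying the symmetry condition: for every value ℓ, μ{y : L(y) = ℓ} = (1/ℓ)·μ{y : L(y) = 1/ℓ}. Then on the product space Y × Y with product measure μ ⊗ μ and L⁺(y₁,y₂) = L(y₁)L(y₂), the half-weighted probability satisfies P[L⁺ ⪇ 1] = P[L ⪇ 1]² + Σ_{ℓ₁ ⪈ 1, ℓ₂ ⪈ 1} μ[L=ℓ₁]μ[L=ℓ₂]·max{ℓ₁,ℓ₂}, where the sum over ℓ ⪈ 1 counts values ℓ > 1 with full weight and the value ℓ = 1 with half weight. -/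
open Finset

/-- mass of the likelihood-ratio value `ℓ` under output distribution `w`: `μ[L = ℓ]`. -/
noncomputable def pm {Y : Type*} [Fintype Y] (w L : Y → ℝ) (ℓ : ℝ) : ℝ :=
  ∑ y, if L y = ℓ then w y else 0

/-- `P[L < 1]` -/
noncomputable def Plt {Y : Type*} [Fintype Y] (w L : Y → ℝ) : ℝ :=
  ∑ y, if L y < 1 then w y else 0

/-- `P[L > 1]` -/
noncomputable def Pgt {Y : Type*} [Fintype Y] (w L : Y → ℝ) : ℝ :=
  ∑ y, if 1 < L y then w y else 0

/-- `P[L = 1]` -/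
noncomputable def Peq {Y : Type*} [Fintype Y] (w L : Y → ℝ) : ℝ :=
  ∑ y, if L y = 1 then w y else 0

/-- half-weighted probability `P[L ⪇ 1] = P[L<1] + P[L=1]/2` -/
noncomputable def Plneq {Y : Type*} [Fintype Y] (w L : Y → ℝ) : ℝ :=
  Plt w L + Peq w L / 2

/-- half-weighted probability `P[L ⪈ 1] = P[L>1] + P[L=1]/2` -/
noncomputable def Pgneq {Y : Type*} [Fintype Y] (w L : Y → ℝ) : ℝ :=
  Pgt w L + Peq w L / 2

/-- half-weighted double sum `Σ_{ℓ₁⪈1, ℓ₂⪈1} μ[L=ℓ₁]μ[L=ℓ₂] f(ℓ₁,ℓ₂)`: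
values `> 1` with full weight, the value `1` with half weight. -/
noncomputable def hwSum {Y : Type*} [Fintype Y] (w L : Y → ℝ) (f : ℝ → ℝ → ℝ) : ℝ :=
  (∑ l1 ∈ (Finset.image L Finset.univ).filter (fun l => 1 < l),
    ∑ l2 ∈ (Finset.image L Finset.univ).filter (fun l => 1 < l),
      pm w L l1 * pm w L l2 * f l1 l2)
  + Peq w L * ∑ l ∈ (Finset.image L Finset.univ).filter (fun l => 1 < l), pm w L l * f l 1
  + (1 / 4) * Peq w L ^ 2 * f 1 1

/-- `P[L⁺ ⪇ 1]` on the product space with `L⁺(y₁,y₂) = L(y₁)L(y₂)`. -/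
noncomputable def PplusLneq {Y : Type*} [Fintype Y] (w L : Y → ℝ) : ℝ :=
  (∑ y1, ∑ y2, if L y1 * L y2 < 1 then w y1 * w y2 else 0)
  + (∑ y1, ∑ y2, if L y1 * L y2 = 1 then w y1 * w y2 else 0) / 2

/-- `P[L⁺ ⪈ 1]` on the product space with `L⁺(y₁,y₂) = L(y₁)L(y₂)`. -/
noncomputable def PplusGneq {Y : Type*} [Fintype Y] (w L : Y → ℝ) : ℝ :=
  (∑ y1, ∑ y2, if 1 < L y1 * L y2 then w y1 * w y2 else 0)
  + (∑ y1, ∑ y2, if L y1 * L y2 = 1 then w y1 * w y2 else 0) / 2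

/-! Write `e(t) = 1, 1/2, 0` according as `t < 1`, `t = 1`, `t > 1` (`lneqWeight`), and
`ē(t) = e(1/t)` for `t > 0` (`gneqWeight`).
For positive `s, t` one has `e(st) = e(s) e(t) + e(st) e(s) ē(t) + e(st) ē(s) e(t)`, and the first
term gives `P[L ⪇ 1]²`. Symmetry of the channel is the change of measure `E[g(L)] = E[L g(1/L)]`;
applied to the coordinate carrying `e` in each cross term, it turns both cross terms into
integrals against `ē(L₁) ē(L₂)`, of `L₁ e(L₂/L₁)` and `L₂ e(L₁/L₂)`, whose sum is `max L₁ L₂`. -/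

noncomputable def lneqWeight (t : ℝ) : ℝ := if t < 1 then 1 else if t = 1 then 1 / 2 else 0

noncomputable def gneqWeight (t : ℝ) : ℝ := if 1 < t then 1 else if t = 1 then 1 / 2 else 0

lemma lneqWeight_inv {t : ℝ} (ht : 0 < t) : lneqWeight t⁻¹ = gneqWeight t := by
  unfold lneqWeight gneqWeight
  rcases lt_trichotomy t 1 with h | rfl | h
  · simp [h.not_gt, h.ne, (one_lt_inv₀ ht).2 h |>.not_gt]
  · simp
  · simp [h, inv_lt_one_of_one_lt₀ h]

lemma lneqWeight_mul {s : ℝ} (hs : 0 < s) (t : ℝ) :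
    lneqWeight (s * t) = lneqWeight s * lneqWeight t
      + lneqWeight (s * t) * lneqWeight s * gneqWeight t
      + lneqWeight (s * t) * gneqWeight s * lneqWeight t := by
  unfold lneqWeight gneqWeight
  split_ifs <;> norm_num <;> first | order | nlinarith | simp_all

lemma mul_lneqWeight_add_mul_lneqWeight {s t : ℝ} (hs : 0 < s) (ht : 0 < t) :
    s * lneqWeight (s⁻¹ * t) + t * lneqWeight (s * t⁻¹) = max s t := by
  rw [inv_mul_eq_div, ← div_eq_mul_inv]
  unfold lneqWeight
  rcases lt_trichotomy s t with h | rfl | h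
  · simp [max_eq_right h.le, ((one_lt_div hs).2 h).not_gt, ((one_lt_div hs).2 h).ne',
      (div_lt_one ht).2 h]
  · simp [hs.ne']
    ring
  · simp [max_eq_left h.le, ((one_lt_div ht).2 h).not_gt, ((one_lt_div ht).2 h).ne',
      (div_lt_one hs).2 h]

section ProductSums

variable {Y : Type*} [Fintype Y] (w L : Y → ℝ)

lemma pm_eq_zero_of_notMem {l : ℝ} (hl : l ∉ image L univ) : pm w L l = 0 :=
  sum_eq_zero fun y _ => if_neg fun (h : L y = l) => hl (h ▸ mem_image_of_mem L (mem_univ y))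

lemma sum_image_pm_mul (h : ℝ → ℝ) :
    ∑ l ∈ image L univ, pm w L l * h l = ∑ y, w y * h (L y) := by
  simp only [pm, sum_mul, ite_mul, zero_mul]
  rw [sum_comm]
  refine sum_congr rfl fun y _ => ?_
  rw [sum_ite_eq (image L univ) (L y) (fun l => w y * h l),
    if_pos (mem_image_of_mem L (mem_univ y))]

lemma sum_filter_pm_mul (p : ℝ → Prop) [DecidablePred p] (h : ℝ → ℝ) :
    ∑ l ∈ (image L univ).filter p, pm w L l * h l
      = ∑ y, w y * if p (L y) then h (L y) else 0 := by
  rw [sum_filter, ← sum_image_pm_mul w L fun l => if p l then h l else 0]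
  simp only [mul_ite, mul_zero]

lemma sum_mul_eq_sum_mul_mul_inv (hL : ∀ y, 0 < L y)
    (hsym : ∀ l : ℝ, 0 < l → pm w L l = (1 / l) * pm w L (1 / l)) (g : ℝ → ℝ) :
    ∑ y, w y * g (L y) = ∑ y, w y * (L y * g (L y)⁻¹) := by
  have hpos : ∀ l ∈ image L univ, 0 < l := by
    simp only [mem_image, mem_univ, true_and, forall_exists_index, forall_apply_eq_imp_iff]
    exact hL
  have hmem : ∀ l, pm w L l ≠ 0 → l ∈ image L univ := fun l h => by
    by_contra hl
    exact h (pm_eq_zero_of_notMem w L hl)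
  rw [← sum_image_pm_mul, ← sum_image_pm_mul w L fun l => l * g l⁻¹]
  symm
  calc ∑ l ∈ image L univ, pm w L l * (l * g l⁻¹)
      = ∑ l ∈ image L univ, pm w L l⁻¹ * g l⁻¹ := sum_congr rfl fun l hl => by
        rw [hsym l (hpos l hl), one_div]
        field_simp [(hpos l hl).ne']
    _ = ∑ l ∈ image L univ, pm w L l * g l := by
      refine sum_bij_ne_zero (fun l _ _ => l⁻¹) (fun l _ h => hmem _ (left_ne_zero_of_mul h))
        (fun _ _ _ _ _ _ h => inv_injective h)
        (fun m hm h => ⟨m⁻¹, ?_, by simpa using h, inv_inv m⟩) (fun _ _ _ => rfl)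
      refine hmem _ fun h0 => left_ne_zero_of_mul h ?_
      rw [hsym m (hpos m hm), one_div, h0, mul_zero]

noncomputable def pairExpect (G : ℝ → ℝ → ℝ) : ℝ :=
  ∑ y₁, ∑ y₂, w y₁ * w y₂ * G (L y₁) (L y₂)

lemma pairExpect_add (G H : ℝ → ℝ → ℝ) :
    pairExpect w L (fun s t => G s t + H s t) = pairExpect w L G + pairExpect w L H := by
  simp only [pairExpect, mul_add, sum_add_distrib]

lemma pairExpect_congr (hL : ∀ y, 0 < L y) {G H : ℝ → ℝ → ℝ}
    (h : ∀ s t, 0 < s → 0 < t → G s t = H s t) : pairExpect w L G = pairExpect w L H :=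
  sum_congr rfl fun _ _ => sum_congr rfl fun _ _ => by rw [h _ _ (hL _) (hL _)]

lemma pairExpect_mul (g h : ℝ → ℝ) :
    pairExpect w L (fun s t => g s * h t) = (∑ y, w y * g (L y)) * ∑ y, w y * h (L y) := by
  simp only [pairExpect, sum_mul_sum]
  exact sum_congr rfl fun _ _ => sum_congr rfl fun _ _ => by ring

lemma pairExpect_swap (G : ℝ → ℝ → ℝ) : pairExpect w L G = pairExpect w L fun s t => G t s := by
  rw [pairExpect, sum_comm]
  exact sum_congr rfl fun _ _ => sum_congr rfl fun _ _ => by ring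

lemma pairExpect_eq_symmetrize (G : ℝ → ℝ → ℝ) :
    pairExpect w L G = pairExpect w L fun s t => (G s t + G t s) / 2 := by
  calc pairExpect w L G = (pairExpect w L G + pairExpect w L fun s t => G t s) / 2 := by
        rw [← pairExpect_swap]; ring
    _ = _ := by
        simp only [pairExpect, ← sum_add_distrib, sum_div]
        exact sum_congr rfl fun _ _ => sum_congr rfl fun _ _ => by ring

variable {w L}

lemma PplusLneq_eq_pairExpect : PplusLneq w L = pairExpect w L fun s t => lneqWeight (s * t) := by
  simp only [PplusLneq, pairExpect, lneqWeight, sum_div, ← sum_add_distrib]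
  refine sum_congr rfl fun _ _ => sum_congr rfl fun _ _ => ?_
  split_ifs <;> first | order | ring1

lemma Plneq_eq_sum : Plneq w L = ∑ y, w y * lneqWeight (L y) := by
  simp only [Plneq, Plt, Peq, lneqWeight, sum_div, ← sum_add_distrib]
  refine sum_congr rfl fun _ _ => ?_
  split_ifs <;> first | order | ring1

lemma hwSum_eq_pairExpect (f : ℝ → ℝ → ℝ) (hf : ∀ s t, f s t = f t s) :
    hwSum w L f = pairExpect w L fun s t => gneqWeight s * gneqWeight t * f s t := by
  have hPeq : Peq w L = ∑ y, w y * if L y = 1 then 1 else 0 := by simp [Peq, mul_ite]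
  have hA : ∑ l₁ ∈ (image L univ).filter (1 < ·), ∑ l₂ ∈ (image L univ).filter (1 < ·),
      pm w L l₁ * pm w L l₂ * f l₁ l₂ =
      pairExpect w L fun s t => if 1 < s then if 1 < t then f s t else 0 else 0 := by
    simp_rw [mul_assoc, ← mul_sum, sum_filter_pm_mul]
    simp only [pairExpect, mul_sum, mul_ite, mul_zero, mul_assoc, sum_ite_irrel, sum_const_zero]
  have hB : Peq w L * ∑ l ∈ (image L univ).filter (1 < ·), pm w L l * f l 1 =
      pairExpect w L fun s t => (if s = 1 then 1 else 0) * if 1 < t then f t 1 else 0 := by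
    rw [pairExpect_mul, hPeq, sum_filter_pm_mul]
  have hC : 1 / 4 * Peq w L ^ 2 * f 1 1 =
      pairExpect w L fun s t =>
        (if s = 1 then 1 else 0) * ((if t = 1 then 1 else 0) * (f 1 1 / 4)) := by
    rw [pairExpect_mul, hPeq]
    simp only [← mul_assoc, ← sum_mul]
    ring
  -- `hwSum` counts a pair with exactly one value `1` in one order only; symmetrizing spreads it
  -- over both orders, which is where the symmetry of `f` enters.
  rw [hwSum, hA, hB, hC, ← pairExpect_add, ← pairExpect_add, pairExpect_eq_symmetrize]
  congr 1
  funext s t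
  unfold gneqWeight
  split_ifs <;> subst_vars <;> first | order | ring1 | (rw [hf]; ring1)

lemma pairExpect_inv_left (hL : ∀ y, 0 < L y)
    (hsym : ∀ l : ℝ, 0 < l → pm w L l = (1 / l) * pm w L (1 / l)) (G : ℝ → ℝ → ℝ) :
    pairExpect w L G = pairExpect w L fun s t => s * G s⁻¹ t := by
  have h := sum_mul_eq_sum_mul_mul_inv w L hL hsym fun s => ∑ y₂, w y₂ * G s (L y₂)
  simp only [mul_sum] at h
  simpa only [pairExpect, mul_assoc, mul_left_comm] using h

lemma pairExpect_inv_right (hL : ∀ y, 0 < L y)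
    (hsym : ∀ l : ℝ, 0 < l → pm w L l = (1 / l) * pm w L (1 / l)) (G : ℝ → ℝ → ℝ) :
    pairExpect w L G = pairExpect w L fun s t => t * G s t⁻¹ := by
  rw [pairExpect_swap, pairExpect_inv_left hL hsym, pairExpect_swap]

end ProductSums

theorem plus_transform_lneq_identity_general {Y : Type*} [Fintype Y] (w L : Y → ℝ)
    (hL : ∀ y, 0 < L y)
    (hsym : ∀ l : ℝ, 0 < l → pm w L l = (1 / l) * pm w L (1 / l)) :
    PplusLneq w L = (Plneq w L) ^ 2 + hwSum w L (fun l1 l2 => max l1 l2) := by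
  have hcross : (pairExpect w L fun s t => lneqWeight (s * t) * lneqWeight s * gneqWeight t) +
      (pairExpect w L fun s t => lneqWeight (s * t) * gneqWeight s * lneqWeight t) =
      pairExpect w L fun s t => gneqWeight s * gneqWeight t * max s t := by
    rw [pairExpect_inv_left hL hsym,
      pairExpect_inv_right hL hsym fun s t => lneqWeight (s * t) * gneqWeight s * lneqWeight t,
      ← pairExpect_add]
    refine pairExpect_congr w L hL fun s t hs ht => ?_
    rw [lneqWeight_inv hs, lneqWeight_inv ht, ← mul_lneqWeight_add_mul_lneqWeight hs ht]
    ring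
  rw [PplusLneq_eq_pairExpect, pairExpect_congr w L hL fun s t hs _ => lneqWeight_mul hs t,
    pairExpect_add, pairExpect_add, pairExpect_mul, add_assoc, hcross, Plneq_eq_sum, sq,
    hwSum_eq_pairExpect _ max_comm]

/-- Plus transform half-weighted probability:
`P[L⁺ ⪇ 1] = P[L ⪇ 1]² + Σ_{ℓ₁⪈1,ℓ₂⪈1} μ[L=ℓ₁]μ[L=ℓ₂]·max{ℓ₁,ℓ₂}`. -/
theorem plus_transform_lneq_identity {Y : Type*} [Fintype Y] (w L : Y → ℝ)
    (hw : ∀ y, 0 ≤ w y) (hwsum : ∑ y, w y = 1) (hL : ∀ y, 0 < L y)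
    (hsym : ∀ l : ℝ, 0 < l → pm w L l = (1 / l) * pm w L (1 / l)) :
    PplusLneq w L = (Plneq w L) ^ 2 + hwSum w L (fun l1 l2 => max l1 l2) :=
  plus_transform_lneq_identity_general w L hL hsym
end

section
/- Let μ be a probability measure on a finite set Y and L : Y → ℝ positive with symmetry μ[L=ℓ] = (1/ℓ)μ[L=1/ℓ]. Let a = P[L ⪈ 1], b = P[L ⪇ 1] (so a + b = 1), and let S_min = Σ_{ℓ₁⪈1,ℓ₂⪈1} μ[L=ℓ₁]μ[L=ℓ₂]min{ℓ₁,ℓ₂}, S_max the analogous sum with max. Then the plus transform satisfies P[L⁺ ⪇ 1] = b² + S_max ≥ P[L⁺ ⪈ 1] = a² + S_min. In particular, assuming a ≤ b, the plus transform preserves the inequality P[L⁺ ⪈ 1] ≤ P[L⁺ ⪇ 1]. -/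
open Finset

/-!
Write `wsum w L g = E[g(L)]` and `wsum₂ w L F = E[F(L₁, L₂)]` for two independent copies, and
let `indLneq`, `indGneq` be the half-weighted indicators of `⪇ 1` and `⪈ 1`, so that they sum
to `1` and `indLneq (1 / x) = indGneq x`. The symmetry hypothesis on the law of `L` is exactly
the change of measure `E[g(L)] = E[L g(1/L)]`.

For `Ξ = indLneq` or `indGneq`, split `Ξ(L₁L₂)` along
`1 = (indLneq + indGneq)(L₁) (indLneq + indGneq)(L₂)`. The two diagonal parts together give
`Ξ(L₁) Ξ(L₂)`, with expectation `Plneq²` resp. `Pgneq²`. The change of measure in `L₁` turns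
the mixed part `indLneq(L₁) indGneq(L₂) Ξ(L₁L₂)` into `indGneq(L₁) indGneq(L₂) L₁ Ξ(L₂/L₁)`,
and after symmetrising, `a Ξ(b/a) + b Ξ(a/b)` is `max a b` resp. `min a b`. The inequality
then follows from `min ≤ max`.
-/

noncomputable def indLneq (x : ℝ) : ℝ := if x < 1 then 1 else if x = 1 then 1 / 2 else 0

noncomputable def indGneq (x : ℝ) : ℝ := if 1 < x then 1 else if x = 1 then 1 / 2 else 0

lemma indGneq_nonneg (x : ℝ) : 0 ≤ indGneq x := by
  unfold indGneq; split_ifs <;> norm_num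

section WeightedSum

variable {Y : Type*} [Fintype Y] (w L : Y → ℝ)

noncomputable def wsum (g : ℝ → ℝ) : ℝ := ∑ y, w y * g (L y)

noncomputable def wsum₂ (F : ℝ → ℝ → ℝ) : ℝ := wsum w L fun a => wsum w L (F a)

variable {w L}

lemma wsum_add (f g : ℝ → ℝ) :
    wsum w L (fun x => f x + g x) = wsum w L f + wsum w L g := by
  simp only [wsum, mul_add, Finset.sum_add_distrib]

lemma wsum_const_mul (c : ℝ) (g : ℝ → ℝ) : wsum w L (fun x => c * g x) = c * wsum w L g := by
  rw [wsum, wsum, Finset.mul_sum]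
  exact Finset.sum_congr rfl fun y _ => mul_left_comm _ _ _

lemma wsum_congr (hL : ∀ y, 0 < L y) {f g : ℝ → ℝ} (h : ∀ x, 0 < x → f x = g x) :
    wsum w L f = wsum w L g :=
  Finset.sum_congr rfl fun y _ => by rw [h _ (hL y)]

lemma wsum_le_wsum (hw : ∀ y, 0 ≤ w y) {f g : ℝ → ℝ} (h : ∀ x, f x ≤ g x) :
    wsum w L f ≤ wsum w L g :=
  Finset.sum_le_sum fun y _ => mul_le_mul_of_nonneg_left (h _) (hw y)

lemma wsum_nonneg (hw : ∀ y, 0 ≤ w y) {f : ℝ → ℝ} (h : ∀ x, 0 ≤ f x) : 0 ≤ wsum w L f :=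
  Finset.sum_nonneg fun y _ => mul_nonneg (hw y) (h _)

lemma sum_pm_mul_eq_wsum {s : Finset ℝ} (hs : ∀ y, L y ∈ s) (g : ℝ → ℝ) :
    ∑ v ∈ s, pm w L v * g v = wsum w L g := by
  simp only [pm, Finset.sum_mul, ite_mul, zero_mul]
  rw [Finset.sum_comm]
  simp [Finset.sum_ite_eq, hs, wsum]

theorem wsum_eq_of_pm_symm (hL : ∀ y, 0 < L y)
    (hsym : ∀ l : ℝ, 0 < l → pm w L l = (1 / l) * pm w L (1 / l))
    {g g' : ℝ → ℝ} (hg : ∀ x, 0 < x → g' x = x * g (1 / x)) :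
    wsum w L g = wsum w L g' := by
  set s := Finset.univ.image L ∪ Finset.univ.image (fun y => 1 / L y)
  have hs : ∀ y, L y ∈ s := fun y => by simp [s]
  have hpos : ∀ v ∈ s, 0 < v := by
    intro v hv
    simp only [s, Finset.mem_union, Finset.mem_image, Finset.mem_univ, true_and] at hv
    rcases hv with ⟨y, rfl⟩ | ⟨y, rfl⟩ <;> simp [hL y]
  have hinv : ∀ v ∈ s, 1 / v ∈ s := by
    intro v hv
    simp only [s, Finset.mem_union, Finset.mem_image, Finset.mem_univ, true_and] at hv ⊢
    rcases hv with ⟨y, rfl⟩ | ⟨y, rfl⟩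
    · exact Or.inr ⟨y, rfl⟩
    · exact Or.inl ⟨y, by simp⟩
  rw [← sum_pm_mul_eq_wsum hs, ← sum_pm_mul_eq_wsum hs]
  refine Finset.sum_nbij' (fun v => 1 / v) (fun v => 1 / v) hinv hinv
    (fun v _ => one_div_one_div v) (fun v _ => one_div_one_div v) fun v hv => ?_
  rw [hg _ (one_div_pos.2 (hpos v hv)), one_div_one_div, hsym v (hpos v hv)]
  ring

lemma wsum₂_add (F G : ℝ → ℝ → ℝ) :
    wsum₂ w L (fun a b => F a b + G a b) = wsum₂ w L F + wsum₂ w L G := by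
  simp only [wsum₂, wsum_add]

lemma wsum₂_mul (f g : ℝ → ℝ) :
    wsum₂ w L (fun a b => f a * g b) = wsum w L f * wsum w L g := by
  simp only [wsum₂, wsum_const_mul]
  simp only [wsum, Finset.sum_mul]
  exact Finset.sum_congr rfl fun y _ => by ring

lemma wsum₂_comm (F : ℝ → ℝ → ℝ) : wsum₂ w L (fun a b => F b a) = wsum₂ w L F := by
  simp only [wsum₂, wsum, Finset.mul_sum]
  rw [Finset.sum_comm]
  exact Finset.sum_congr rfl fun _ _ => Finset.sum_congr rfl fun _ _ => by ring

lemma wsum₂_congr (hL : ∀ y, 0 < L y) {F G : ℝ → ℝ → ℝ}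
    (h : ∀ a b, 0 < a → 0 < b → F a b = G a b) : wsum₂ w L F = wsum₂ w L G :=
  wsum_congr hL fun a ha => wsum_congr hL fun b hb => h a b ha hb

lemma wsum₂_le_wsum₂ (hw : ∀ y, 0 ≤ w y) {F G : ℝ → ℝ → ℝ} (h : ∀ a b, F a b ≤ G a b) :
    wsum₂ w L F ≤ wsum₂ w L G :=
  wsum_le_wsum hw fun a => wsum_le_wsum hw (h a)

lemma wsum₂_eq_of_pm_symm (hL : ∀ y, 0 < L y)
    (hsym : ∀ l : ℝ, 0 < l → pm w L l = (1 / l) * pm w L (1 / l))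
    {F G : ℝ → ℝ → ℝ} (hFG : ∀ a b, 0 < a → G a b = a * F (1 / a) b) :
    wsum₂ w L F = wsum₂ w L G :=
  wsum_eq_of_pm_symm hL hsym fun a ha => by
    rw [← wsum_const_mul]
    exact congrArg _ (funext fun b => hFG a b ha)

end WeightedSum

section Indicators

variable {a b : ℝ}

lemma indLneq_add_indGneq (x : ℝ) : indLneq x + indGneq x = 1 := by
  unfold indLneq indGneq
  rcases lt_trichotomy x 1 with h | rfl | h
  · simp [h, h.not_gt, h.ne]
  · norm_num
  · simp [h, h.not_gt, h.ne']

lemma indLneq_one_div (ha : 0 < a) : indLneq (1 / a) = indGneq a := by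
  simp only [indLneq, indGneq, div_lt_one ha, div_eq_one_iff_eq ha.ne', eq_comm]

lemma indLneq_of_lt (h : a < 1) : indLneq a = 1 := if_pos h
lemma indLneq_one : indLneq 1 = 1 / 2 := by simp [indLneq]
lemma indLneq_of_gt (h : 1 < a) : indLneq a = 0 := by simp [indLneq, h.not_gt, h.ne']
lemma indGneq_of_lt (h : a < 1) : indGneq a = 0 := by simp [indGneq, h.not_gt, h.ne]
lemma indGneq_one : indGneq 1 = 1 / 2 := by simp [indGneq]
lemma indGneq_of_gt (h : 1 < a) : indGneq a = 1 := if_pos h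

lemma indLneq_mul_mul_add (ha : 0 < a) :
    indLneq (a * b) * (indLneq a * indLneq b + indGneq a * indGneq b)
      = indLneq a * indLneq b := by
  have hlt : a < 1 → b < 1 → a * b < 1 := fun ha1 hb1 =>
    mul_lt_one_of_nonneg_of_lt_one_left ha.le ha1 hb1.le
  have hgt : 1 < a → 1 < b → 1 < a * b := fun ha1 hb1 => one_lt_mul_of_lt_of_le ha1 hb1.le
  rcases lt_trichotomy a 1 with ha1 | rfl | ha1 <;>
  rcases lt_trichotomy b 1 with hb1 | rfl | hb1 <;>
  simp [*, indLneq_of_lt, indLneq_of_gt, indGneq_of_lt, indGneq_of_gt, indLneq_one, indGneq_one]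
  norm_num

lemma indGneq_mul_mul_add (ha : 0 < a) :
    indGneq (a * b) * (indLneq a * indLneq b + indGneq a * indGneq b)
      = indGneq a * indGneq b := by
  have hlt : a < 1 → b < 1 → a * b < 1 := fun ha1 hb1 =>
    mul_lt_one_of_nonneg_of_lt_one_left ha.le ha1 hb1.le
  have hgt : 1 < a → 1 < b → 1 < a * b := fun ha1 hb1 => one_lt_mul_of_lt_of_le ha1 hb1.le
  rcases lt_trichotomy a 1 with ha1 | rfl | ha1 <;>
  rcases lt_trichotomy b 1 with hb1 | rfl | hb1 <;>
  simp [*, indLneq_of_lt, indLneq_of_gt, indGneq_of_lt, indGneq_of_gt, indLneq_one, indGneq_one]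
  norm_num

lemma mul_indLneq_div_add_mul_indLneq_div (ha : 0 < a) (hb : 0 < b) :
    a * indLneq (b / a) + b * indLneq (a / b) = max a b := by
  rcases lt_trichotomy a b with h | rfl | h
  · rw [indLneq_of_gt ((one_lt_div ha).2 h), indLneq_of_lt ((div_lt_one hb).2 h),
      max_eq_right h.le]
    ring
  · rw [div_self ha.ne', indLneq_one, max_self]; ring
  · rw [indLneq_of_lt ((div_lt_one ha).2 h), indLneq_of_gt ((one_lt_div hb).2 h),
      max_eq_left h.le]
    ring

lemma mul_indGneq_div_add_mul_indGneq_div (ha : 0 < a) (hb : 0 < b) :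
    a * indGneq (b / a) + b * indGneq (a / b) = min a b := by
  rcases lt_trichotomy a b with h | rfl | h
  · rw [indGneq_of_gt ((one_lt_div ha).2 h), indGneq_of_lt ((div_lt_one hb).2 h),
      min_eq_left h.le]
    ring
  · rw [div_self ha.ne', indGneq_one, min_self]; ring
  · rw [indGneq_of_lt ((div_lt_one ha).2 h), indGneq_of_gt ((one_lt_div hb).2 h),
      min_eq_right h.le]
    ring

end Indicators

section Tilt

variable {Y : Type*} [Fintype Y] {w L : Y → ℝ}

theorem wsum₂_comp_mul (hL : ∀ y, 0 < L y)
    (hsym : ∀ l : ℝ, 0 < l → pm w L l = (1 / l) * pm w L (1 / l)) (Ξ : ℝ → ℝ) :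
    wsum₂ w L (fun a b => Ξ (a * b))
      = wsum₂ w L (fun a b => Ξ (a * b) * (indLneq a * indLneq b + indGneq a * indGneq b))
        + wsum₂ w L (fun a b => indGneq a * indGneq b * (a * Ξ (b / a) + b * Ξ (a / b))) := by
  set mixed : ℝ → ℝ → ℝ := fun a b => indLneq a * indGneq b * Ξ (a * b)
  set tilted : ℝ → ℝ → ℝ := fun a b => a * indGneq a * indGneq b * Ξ (b / a)
  have hsplit : wsum₂ w L (fun a b => Ξ (a * b))
      = wsum₂ w L (fun a b => Ξ (a * b) * (indLneq a * indLneq b + indGneq a * indGneq b))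
        + (wsum₂ w L mixed + wsum₂ w L (fun a b => mixed b a)) := by
    rw [← wsum₂_add, ← wsum₂_add]
    refine wsum₂_congr hL fun a b _ _ => ?_
    have hone : (indLneq a + indGneq a) * (indLneq b + indGneq b) = 1 := by
      rw [indLneq_add_indGneq, indLneq_add_indGneq, one_mul]
    simp only [mixed, mul_comm b a]
    linear_combination (-Ξ (a * b)) * hone
  have htilt : wsum₂ w L mixed = wsum₂ w L tilted :=
    wsum₂_eq_of_pm_symm hL hsym fun a b ha => by
      simp only [mixed, tilted, indLneq_one_div ha, one_div_mul_eq_div]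
      ring
  have hsymm : wsum₂ w L (fun a b => indGneq a * indGneq b * (a * Ξ (b / a) + b * Ξ (a / b)))
      = wsum₂ w L tilted + wsum₂ w L (fun a b => tilted b a) := by
    rw [← wsum₂_add]
    exact wsum₂_congr hL fun a b _ _ => by simp only [tilted]; ring
  rw [hsplit, hsymm, wsum₂_comm mixed, wsum₂_comm tilted, htilt]

end Tilt

section HalfWeighted

variable {Y : Type*} [Fintype Y] {w L : Y → ℝ}

lemma wsum_indGneq_mul (g : ℝ → ℝ) :
    wsum w L (fun x => indGneq x * g x)
      = ∑ v ∈ (Finset.univ.image L).filter (fun l => 1 < l), pm w L v * g v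
        + Peq w L * g 1 / 2 := by
  rw [Finset.sum_filter]
  simp only [← mul_ite_zero]
  rw [sum_pm_mul_eq_wsum (fun y => Finset.mem_image_of_mem L (Finset.mem_univ y)), Peq, wsum,
    wsum, Finset.sum_mul, Finset.sum_div, ← Finset.sum_add_distrib]
  refine Finset.sum_congr rfl fun y _ => ?_
  rcases lt_trichotomy (L y) 1 with h | h | h
  · simp [indGneq_of_lt h, h.not_gt, h.ne]
  · simp [h, indGneq_one]
    ring
  · simp [indGneq_of_gt h, h, h.ne']

lemma hwSum_eq_wsum₂ {f : ℝ → ℝ → ℝ} (hf : ∀ a b, f a b = f b a) :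
    hwSum w L f = wsum₂ w L (fun a b => indGneq a * indGneq b * f a b) := by
  simp only [wsum₂, mul_assoc, wsum_const_mul, wsum_indGneq_mul, hf 1]
  simp only [hwSum, mul_add, add_div, Finset.sum_add_distrib, Finset.mul_sum, Finset.sum_div]
  ring_nf
  rw [Finset.sum_mul]
  ring_nf

lemma ite_lt_add_ite_eq_div_two (t c : ℝ) :
    (if t < 1 then c else 0) + (if t = 1 then c else 0) / 2 = c * indLneq t := by
  rcases lt_trichotomy t 1 with h | rfl | h
  · simp [indLneq_of_lt h, h, h.ne]
  · simp [indLneq_one]; ring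
  · simp [indLneq_of_gt h, h.not_gt, h.ne']

lemma ite_gt_add_ite_eq_div_two (t c : ℝ) :
    (if 1 < t then c else 0) + (if t = 1 then c else 0) / 2 = c * indGneq t := by
  rcases lt_trichotomy t 1 with h | rfl | h
  · simp [indGneq_of_lt h, h.not_gt, h.ne]
  · simp [indGneq_one]; ring
  · simp [indGneq_of_gt h, h, h.ne']

lemma Plneq_eq_wsum : Plneq w L = wsum w L indLneq := by
  simp only [Plneq, Plt, Peq, wsum, Finset.sum_div, ← Finset.sum_add_distrib,
    ite_lt_add_ite_eq_div_two]

lemma Pgneq_eq_wsum : Pgneq w L = wsum w L indGneq := by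
  simp only [Pgneq, Pgt, Peq, wsum, Finset.sum_div, ← Finset.sum_add_distrib,
    ite_gt_add_ite_eq_div_two]

lemma PplusLneq_eq_wsum₂ : PplusLneq w L = wsum₂ w L (fun a b => indLneq (a * b)) := by
  simp only [PplusLneq, wsum₂, wsum, Finset.mul_sum, Finset.sum_div, ← Finset.sum_add_distrib,
    ite_lt_add_ite_eq_div_two, mul_assoc]

lemma PplusGneq_eq_wsum₂ : PplusGneq w L = wsum₂ w L (fun a b => indGneq (a * b)) := by
  simp only [PplusGneq, wsum₂, wsum, Finset.mul_sum, Finset.sum_div, ← Finset.sum_add_distrib,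
    ite_gt_add_ite_eq_div_two, mul_assoc]

theorem PplusLneq_eq (hL : ∀ y, 0 < L y)
    (hsym : ∀ l : ℝ, 0 < l → pm w L l = (1 / l) * pm w L (1 / l)) :
    PplusLneq w L = (Plneq w L) ^ 2 + hwSum w L (fun l1 l2 => max l1 l2) := by
  rw [PplusLneq_eq_wsum₂, wsum₂_comp_mul hL hsym, Plneq_eq_wsum, sq, ← wsum₂_mul,
    hwSum_eq_wsum₂ max_comm]
  congr 1 <;> refine wsum₂_congr hL fun a b ha hb => ?_
  · exact indLneq_mul_mul_add ha
  · rw [mul_indLneq_div_add_mul_indLneq_div ha hb]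

theorem PplusGneq_eq (hL : ∀ y, 0 < L y)
    (hsym : ∀ l : ℝ, 0 < l → pm w L l = (1 / l) * pm w L (1 / l)) :
    PplusGneq w L = (Pgneq w L) ^ 2 + hwSum w L (fun l1 l2 => min l1 l2) := by
  rw [PplusGneq_eq_wsum₂, wsum₂_comp_mul hL hsym, Pgneq_eq_wsum, sq, ← wsum₂_mul,
    hwSum_eq_wsum₂ min_comm]
  congr 1 <;> refine wsum₂_congr hL fun a b ha hb => ?_
  · exact indGneq_mul_mul_add ha
  · rw [mul_indGneq_div_add_mul_indGneq_div ha hb]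

lemma hwSum_min_le_hwSum_max (hw : ∀ y, 0 ≤ w y) :
    hwSum w L (fun l1 l2 => min l1 l2) ≤ hwSum w L (fun l1 l2 => max l1 l2) := by
  rw [hwSum_eq_wsum₂ max_comm, hwSum_eq_wsum₂ min_comm]
  exact wsum₂_le_wsum₂ hw fun a b =>
    mul_le_mul_of_nonneg_left min_le_max (mul_nonneg (indGneq_nonneg a) (indGneq_nonneg b))

lemma Pgneq_nonneg (hw : ∀ y, 0 ≤ w y) : 0 ≤ Pgneq w L := by
  rw [Pgneq_eq_wsum]
  exact wsum_nonneg hw indGneq_nonneg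

end HalfWeighted

theorem plus_transform_preserves_inequality_general {Y : Type*} [Fintype Y] (w L : Y → ℝ)
    (hw : ∀ y, 0 ≤ w y) (hL : ∀ y, 0 < L y)
    (hsym : ∀ l : ℝ, 0 < l → pm w L l = (1 / l) * pm w L (1 / l)) :
    PplusLneq w L = (Plneq w L) ^ 2 + hwSum w L (fun l1 l2 => max l1 l2) ∧
    PplusGneq w L = (Pgneq w L) ^ 2 + hwSum w L (fun l1 l2 => min l1 l2) ∧
    (Pgneq w L ≤ Plneq w L → PplusGneq w L ≤ PplusLneq w L) := by
  refine ⟨PplusLneq_eq hL hsym, PplusGneq_eq hL hsym, fun h => ?_⟩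
  rw [PplusLneq_eq hL hsym, PplusGneq_eq hL hsym]
  exact add_le_add (pow_le_pow_left₀ (Pgneq_nonneg hw) h 2) (hwSum_min_le_hwSum_max hw)

/-- Plus transform: `P[L⁺ ⪇ 1] = b² + S_max`, `P[L⁺ ⪈ 1] = a² + S_min`, and if
`a ≤ b` the inequality `P[L⁺ ⪈ 1] ≤ P[L⁺ ⪇ 1]` is preserved. -/
theorem plus_transform_preserves_inequality {Y : Type*} [Fintype Y] (w L : Y → ℝ)
    (hw : ∀ y, 0 ≤ w y) (hwsum : ∑ y, w y = 1) (hL : ∀ y, 0 < L y)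
    (hsym : ∀ l : ℝ, 0 < l → pm w L l = (1 / l) * pm w L (1 / l)) :
    PplusLneq w L = (Plneq w L) ^ 2 + hwSum w L (fun l1 l2 => max l1 l2) ∧
    PplusGneq w L = (Pgneq w L) ^ 2 + hwSum w L (fun l1 l2 => min l1 l2) ∧
    (Pgneq w L ≤ Plneq w L → PplusGneq w L ≤ PplusLneq w L) :=
  plus_transform_preserves_inequality_general w L hw hL hsym
end

section
/- Let (Q_n) be a stochastic process adapted to a filtration (F_n), taking values in [0,1], such that Q_{n+1} = Q_n² with probability 1/2 and Q_{n+1} ∈ [Q_n, 2Q_n − Q_n²] with probability 1/2, conditionally on F_n. Then (Q_n) converges almost surely, and the limit Q_∞ takes values in {0, 1} almost surely. -/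
/-!
Averaging the two branches, `(Q² + (2Q - Q²)) / 2 = Q`, so independence of the coin from the
past makes `Q` a bounded supermartingale, which converges almost surely. On the minus branch
`|Q (n + 1) - Q n| = Q n (1 - Q n)`, hence `E[Q n (1 - Q n)] ≤ 2 E|Q (n + 1) - Q n| → 0` by
dominated convergence, and the limit `q` satisfies `q (1 - q) = 0` almost surely.
-/

open MeasureTheory ProbabilityTheory Filter Topology

section Convergence

variable {Ω : Type*} {m : MeasurableSpace Ω} {P : Measure Ω} [IsFiniteMeasure P]

theorem MeasureTheory.Supermartingale.ae_exists_tendsto_of_bound {F : Filtration ℕ m}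
    {f : ℕ → Ω → ℝ} (hf : Supermartingale f F P) {C : ℝ} (hC : ∀ n ω, |f n ω| ≤ C) :
    ∀ᵐ ω ∂P, ∃ c, Tendsto (fun n => f n ω) atTop (𝓝 c) := by
  have hbdd : ∀ n, eLpNorm ((-f) n) 1 P ≤ (P Set.univ * ENNReal.ofReal C).toNNReal := by
    intro n
    rw [ENNReal.coe_toNNReal (by finiteness)]
    simpa using eLpNorm_le_of_ae_bound (p := 1) (f := (-f) n)
      (Eventually.of_forall fun ω => by simpa using hC n ω)
  filter_upwards [hf.neg.exists_ae_tendsto_of_bdd hbdd] with ω ⟨c, hc⟩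
  exact ⟨-c, by simpa using hc.neg⟩

theorem tendsto_integral_abs_sub_succ_of_ae_tendsto {f : ℕ → Ω → ℝ}
    (hf : ∀ n, AEStronglyMeasurable (f n) P) {C : ℝ} (hC : ∀ n ω, |f n ω| ≤ C)
    (hlim : ∀ᵐ ω ∂P, ∃ c, Tendsto (fun n => f n ω) atTop (𝓝 c)) :
    Tendsto (fun n => ∫ ω, |f (n + 1) ω - f n ω| ∂P) atTop (𝓝 0) := by
  rw [← integral_zero Ω ℝ]
  refine tendsto_integral_of_dominated_convergence (fun _ => 2 * C)
    (fun n => ((hf (n + 1)).sub (hf n)).norm) (integrable_const _)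
    (fun n => Eventually.of_forall fun ω => ?_) ?_
  · rw [Real.norm_eq_abs, abs_abs]
    linarith [abs_sub (f (n + 1) ω) (f n ω), hC (n + 1) ω, hC n ω]
  · filter_upwards [hlim] with ω ⟨c, hc⟩
    simpa using ((hc.comp (tendsto_add_atTop_nat 1)).sub hc).abs

theorem ae_tendsto_zero_of_tendsto_integral {f : ℕ → Ω → ℝ}
    (hf : ∀ n, AEStronglyMeasurable (f n) P) (hf0 : ∀ n ω, 0 ≤ f n ω) {C : ℝ}
    (hC : ∀ n ω, f n ω ≤ C) (hlim : ∀ᵐ ω ∂P, ∃ c, Tendsto (fun n => f n ω) atTop (𝓝 c))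
    (hint : Tendsto (fun n => ∫ ω, f n ω ∂P) atTop (𝓝 0)) :
    ∀ᵐ ω ∂P, Tendsto (fun n => f n ω) atTop (𝓝 0) := by
  set g : Ω → ℝ := fun ω => limUnder atTop (fun n => f n ω)
  have hg : ∀ᵐ ω ∂P, Tendsto (fun n => f n ω) atTop (𝓝 (g ω)) := by
    filter_upwards [hlim] with ω ⟨c, hc⟩
    rwa [show g ω = c from hc.limUnder_eq]
  have hg0 : 0 ≤ᵐ[P] g := by
    filter_upwards [hg] with ω hω using ge_of_tendsto' hω (hf0 · ω)
  have hgC : ∀ᵐ ω ∂P, ‖g ω‖ ≤ C := by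
    filter_upwards [hg, hg0] with ω hω hω0
    rw [Real.norm_eq_abs, abs_of_nonneg hω0]
    exact le_of_tendsto' hω (hC · ω)
  have hgint : Integrable g P :=
    Integrable.of_bound (aestronglyMeasurable_of_tendsto_ae atTop hf hg) C hgC
  have hg_integral : ∫ ω, g ω ∂P = 0 := by
    refine tendsto_nhds_unique (tendsto_integral_of_dominated_convergence (fun _ => C) hf
      (integrable_const C) (fun n => Eventually.of_forall fun ω => ?_) hg) hint
    rw [Real.norm_eq_abs, abs_of_nonneg (hf0 n ω)]
    exact hC n ω
  filter_upwards [hg, (integral_eq_zero_iff_of_nonneg_ae hg0 hgint).1 hg_integral] with ω hω hω0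
  simpa [hω0] using hω

end Convergence

section PolarizationStep

-- `m` is declared last so that it is the ambient instance; `m'` is the σ-algebra of the past.
variable {Ω : Type*} {m' m : MeasurableSpace Ω} {P : Measure Ω} [IsProbabilityMeasure P]
  {b : Ω → Bool}

theorem measure_eq_half_of_measure_true_eq_half (hb : Measurable b)
    (hhalf : P {ω | b ω = true} = 1 / 2) (c : Bool) : P {ω | b ω = c} = 1 / 2 := by
  cases c
  · have hcompl : {ω | b ω = false} = {ω | b ω = true}ᶜ := by ext; simp
    rw [hcompl, prob_compl_eq_one_sub (measurableSet_eq_fun hb measurable_const), hhalf]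
    simp
  · exact hhalf

theorem setIntegral_eq_half_integral_of_indepFun (hb : Measurable b)
    (hhalf : P {ω | b ω = true} = 1 / 2) {h : Ω → ℝ} (hh : AEMeasurable h P)
    (hbh : IndepFun b h P) (c : Bool) :
    ∫ ω in {ω | b ω = c}, h ω ∂P = (∫ ω, h ω ∂P) / 2 := by
  have hc : MeasurableSet[MeasurableSpace.comap b ⊤] {ω | b ω = c} := ⟨{c}, trivial, rfl⟩
  have key := Indep.setIntegral_eq_mul (f := id) hb.comap_le hbh hh hc aestronglyMeasurable_id
  simp only [id] at key
  rw [key, measureReal_def,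
    measure_eq_half_of_measure_true_eq_half hb hhalf c]
  simp [div_eq_inv_mul]

variable {X Y : Ω → ℝ}

theorem setIntegral_le_of_polarization_step (hb : Measurable b)
    (hhalf : P {ω | b ω = true} = 1 / 2) (hindep : Indep (MeasurableSpace.comap b ⊤) m' P)
    (hm' : m' ≤ m) (hXm : Measurable[m'] X) (hX : MemLp X 2 P) (hY : Integrable Y P)
    (hminus : ∀ ω, b ω = false → Y ω = X ω ^ 2)
    (hplus : ∀ ω, b ω = true → Y ω ≤ 2 * X ω - X ω ^ 2)
    {s : Set Ω} (hs : MeasurableSet[m'] s) :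
    ∫ ω in s, Y ω ∂P ≤ ∫ ω in s, X ω ∂P := by
  have half : ∀ {h : Ω → ℝ}, Measurable[m'] h → ∀ c,
      ∫ ω in {ω | b ω = c}, s.indicator h ω ∂P = (∫ ω in s, h ω ∂P) / 2 := fun hh c => by
    rw [setIntegral_eq_half_integral_of_indepFun hb hhalf
      ((hh.indicator hs).mono hm' le_rfl).aemeasurable
      (indep_of_indep_of_le_right hindep (hh.indicator hs).comap_le) c,
      integral_indicator (hm' s hs)]
  have hXint : Integrable X P := hX.integrable one_le_two
  have hX2int : Integrable (fun ω => X ω ^ 2) P := hX.integrable_sq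
  have htrue : MeasurableSet {ω | b ω = true} := measurableSet_eq_fun hb measurable_const
  have hcompl : {ω | b ω = true}ᶜ = {ω | b ω = false} := by ext; simp
  calc ∫ ω in s, Y ω ∂P
      = ∫ ω in {ω | b ω = true}, s.indicator Y ω ∂P
        + ∫ ω in {ω | b ω = false}, s.indicator Y ω ∂P := by
        rw [← hcompl, integral_add_compl htrue (hY.indicator (hm' s hs)),
          integral_indicator (hm' s hs)]
    _ ≤ ∫ ω in {ω | b ω = true}, s.indicator (fun ω => 2 * X ω - X ω ^ 2) ω ∂P
        + ∫ ω in {ω | b ω = false}, s.indicator (fun ω => X ω ^ 2) ω ∂P := by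
        have hs' := hm' s hs
        refine add_le_add (setIntegral_mono_on (hY.indicator hs').integrableOn
          (((hXint.const_mul 2).sub hX2int).indicator hs').integrableOn htrue
          fun ω hω => Set.indicator_le_indicator (hplus ω hω)) (le_of_eq ?_)
        refine setIntegral_congr_fun (hcompl ▸ htrue.compl) fun ω hω => ?_
        by_cases hωs : ω ∈ s <;> simp [hωs, hminus ω hω]
    _ = ∫ ω in s, X ω ∂P := by
        rw [half (h := fun ω => 2 * X ω - X ω ^ 2) ((hXm.const_mul 2).sub (hXm.pow_const 2)),
          half (hXm.pow_const 2),
          integral_sub (hXint.const_mul 2).integrableOn hX2int.integrableOn,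
          integral_const_mul]
        ring

theorem integral_mul_one_sub_le_of_polarization_step (hb : Measurable b)
    (hhalf : P {ω | b ω = true} = 1 / 2) (hindep : Indep (MeasurableSpace.comap b ⊤) m' P)
    (hm' : m' ≤ m) (hXm : Measurable[m'] X) (hX : MemLp X 2 P) (hY : Integrable Y P)
    (hminus : ∀ ω, b ω = false → Y ω = X ω ^ 2) :
    ∫ ω, X ω * (1 - X ω) ∂P ≤ 2 * ∫ ω, |Y ω - X ω| ∂P := by
  have hvar : Measurable[m'] (fun ω => X ω * (1 - X ω)) :=
    hXm.mul (measurable_const.sub hXm)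
  have hXint : Integrable X P := hX.integrable one_le_two
  have hdiff : Integrable (fun ω => |Y ω - X ω|) P := (hY.sub hXint).abs
  have hfalse : MeasurableSet {ω | b ω = false} := measurableSet_eq_fun hb measurable_const
  calc ∫ ω, X ω * (1 - X ω) ∂P
      = 2 * ∫ ω in {ω | b ω = false}, X ω * (1 - X ω) ∂P := by
        rw [setIntegral_eq_half_integral_of_indepFun hb hhalf (hvar.mono hm' le_rfl).aemeasurable
          (indep_of_indep_of_le_right hindep hvar.comap_le)]
        ring
    _ ≤ 2 * ∫ ω in {ω | b ω = false}, |Y ω - X ω| ∂P := by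
        refine mul_le_mul_of_nonneg_left (setIntegral_mono_on ?_ hdiff.integrableOn hfalse
          fun ω hω => ?_) zero_le_two
        · exact (hXint.sub hX.integrable_sq).integrableOn.congr_fun
            (fun ω _ => by simp only [Pi.sub_apply]; ring) hfalse
        · rw [hminus ω hω, abs_sub_comm]
          linarith [le_abs_self (X ω - X ω ^ 2)]
    _ ≤ 2 * ∫ ω, |Y ω - X ω| ∂P := by
        refine mul_le_mul_of_nonneg_left ?_ zero_le_two
        exact setIntegral_le_integral hdiff (Eventually.of_forall fun ω => abs_nonneg _)

end PolarizationStep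

/-- The polarization process `Q_n ∈ [0,1]` which, given `F_n`, squares with probability
`1/2` and otherwise moves to a value in `[Q_n, 2Q_n − Q_n²]`, converges a.s. to `{0,1}`. -/
theorem Q_process_polarizes
    {Ω : Type*} {m : MeasurableSpace Ω} (P : Measure Ω) [IsProbabilityMeasure P]
    (F : Filtration ℕ m) (Q : ℕ → Ω → ℝ)
    (hadapted : Adapted F Q)
    (hbound : ∀ n ω, Q n ω ∈ Set.Icc (0 : ℝ) 1)
    (B : ℕ → Ω → Bool) (hBmeas : ∀ n, Measurable (B n))
    (hBhalf : ∀ n, P {ω | B n ω = true} = 1 / 2)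
    (hBindep : ∀ n, Indep (MeasurableSpace.comap (B n) ⊤) (F n) P)
    (hminus : ∀ n ω, B n ω = false → Q (n + 1) ω = (Q n ω) ^ 2)
    (hplus : ∀ n ω, B n ω = true →
      Q n ω ≤ Q (n + 1) ω ∧ Q (n + 1) ω ≤ 2 * Q n ω - (Q n ω) ^ 2) :
    ∀ᵐ ω ∂P, ∃ q : ℝ,
      Tendsto (fun n => Q n ω) atTop (nhds q) ∧ (q = 0 ∨ q = 1) := by
  have hQbdd : ∀ n ω, |Q n ω| ≤ 1 := fun n ω =>
    abs_le.2 ⟨by linarith [(hbound n ω).1], (hbound n ω).2⟩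
  have hQmeas : ∀ n, Measurable (Q n) := fun n => (hadapted n).mono (F.le n) le_rfl
  have hQ : ∀ n, MemLp (Q n) 2 P := fun n =>
    .of_bound (hQmeas n).aestronglyMeasurable 1 (.of_forall (hQbdd n))
  have hsuper : Supermartingale Q F P :=
    supermartingale_of_setIntegral_succ_le hadapted.stronglyAdapted
      (fun n => (hQ n).integrable one_le_two) fun n _ hs =>
      setIntegral_le_of_polarization_step (hBmeas n) (hBhalf n) (hBindep n) (F.le n)
        (hadapted n) (hQ n) ((hQ (n + 1)).integrable one_le_two) (hminus n)
        (fun ω hω => (hplus n ω hω).2) hs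
  have hconv := hsuper.ae_exists_tendsto_of_bound hQbdd
  have hvar0 : ∀ n ω, 0 ≤ Q n ω * (1 - Q n ω) := fun n ω =>
    mul_nonneg (hbound n ω).1 (sub_nonneg.2 (hbound n ω).2)
  have hvar1 : ∀ n ω, Q n ω * (1 - Q n ω) ≤ 1 := fun n ω =>
    (mul_le_of_le_one_right (hbound n ω).1 (by linarith [(hbound n ω).1])).trans (hbound n ω).2
  have hvar : Tendsto (fun n => ∫ ω, Q n ω * (1 - Q n ω) ∂P) atTop (𝓝 0) := by
    refine squeeze_zero (fun n => integral_nonneg (hvar0 n)) (fun n =>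
      integral_mul_one_sub_le_of_polarization_step (hBmeas n) (hBhalf n) (hBindep n) (F.le n)
        (hadapted n) (hQ n) ((hQ (n + 1)).integrable one_le_two) (hminus n)) ?_
    simpa using (tendsto_integral_abs_sub_succ_of_ae_tendsto
        (fun n => (hQmeas n).aestronglyMeasurable) hQbdd hconv).const_mul 2
  have hvar_ae := ae_tendsto_zero_of_tendsto_integral
    (fun n => ((hQmeas n).mul (measurable_const.sub (hQmeas n))).aestronglyMeasurable)
    hvar0 hvar1 (by filter_upwards [hconv] with ω ⟨q, hq⟩
      using ⟨_, hq.mul (tendsto_const_nhds.sub hq)⟩) hvar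
  filter_upwards [hconv, hvar_ae] with ω ⟨q, hq⟩ hvarω
  have hq01 : q * (1 - q) = 0 := tendsto_nhds_unique (hq.mul (tendsto_const_nhds.sub hq)) hvarω
  exact ⟨q, hq, (mul_eq_zero.1 hq01).imp_right fun h => by linarith⟩
end

section
/- Let (R_n) be a stochastic process adapted to a filtration (F_n), taking values in [0,1], such that conditionally on F_n: with probability 1/2, R_{n+1} = 2R_n − R_n², and with probability 1/2, R_{n+1} ≥ R_n². Then (R_n) is a bounded submartingale, converges almost surely, and its limit R_∞ ∈ {0,1} almost surely. -/
/-!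
Conditioning on `F_n`, the coin `B_n` is independent, so the lower bound
`R_{n+1} ≥ 𝟙[B_n] R_n² + 𝟙[¬B_n] (2R_n − R_n²)` has conditional expectation `R_n`: the process is
a submartingale, bounded in `[0,1]`, hence converges a.s. to some `R_∞`. On `{¬B_n}` the increment
is `R_n(1 − R_n)`, so again by independence `E[R_n(1 − R_n)] ≤ 2 E|R_{n+1} − R_n|`. The right side
tends to `0` and the left side to `E[R_∞(1 − R_∞)]` by bounded convergence, forcing `R_∞ ∈ {0,1}`.
-/

open MeasureTheory ProbabilityTheory Filter Topology

section Independence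

variable {Ω : Type*} {mA m' m : MeasurableSpace Ω} {P : Measure Ω} [IsFiniteMeasure P]
  {A : Set Ω} {g : Ω → ℝ}

theorem condExp_indicator_of_indep (hmA : mA ≤ m) (hm' : m' ≤ m) (hind : Indep mA m' P)
    (hA : MeasurableSet[mA] A) (hg : StronglyMeasurable[m'] g) (hgi : Integrable g P) :
    P[A.indicator g|m'] =ᵐ[P] fun ω => P.real A * g ω := by
  have hAi : Integrable (A.indicator (1 : Ω → ℝ)) P := (integrable_const 1).indicator (hmA _ hA)
  have hprod : A.indicator g = g * A.indicator 1 := by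
    ext ω; by_cases h : ω ∈ A <;> simp [h]
  have hconst : P[A.indicator (1 : Ω → ℝ)|m'] =ᵐ[P] fun _ => P.real A := by
    refine (condExp_indep_eq hmA hm' ?_ hind).trans (.of_forall fun _ => ?_)
    · exact stronglyMeasurable_const.indicator hA
    · simp [integral_indicator_one (hmA _ hA)]
  rw [hprod]
  filter_upwards [condExp_mul_of_stronglyMeasurable_left hg (hprod ▸ hgi.indicator (hmA _ hA)) hAi,
    hconst] with ω h1 h2
  rw [h1, Pi.mul_apply, h2, mul_comm]

theorem integral_indicator_of_indep (hmA : mA ≤ m) (hm' : m' ≤ m) (hind : Indep mA m' P)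
    (hA : MeasurableSet[mA] A) (hg : StronglyMeasurable[m'] g) (hgi : Integrable g P) :
    ∫ ω, A.indicator g ω ∂P = P.real A * ∫ ω, g ω ∂P := by
  rw [← integral_condExp hm', integral_congr_ae (condExp_indicator_of_indep hmA hm' hind hA hg hgi),
    integral_const_mul]

theorem le_condExp_of_indep_cases (hmA : mA ≤ m) (hm' : m' ≤ m) (hind : Indep mA m' P)
    (hA : MeasurableSet[mA] A) {f Y : Ω → ℝ} (hf : StronglyMeasurable[m'] f)
    (hg : StronglyMeasurable[m'] g) (hfi : Integrable f P) (hgi : Integrable g P)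
    (hYi : Integrable Y P) (hYA : ∀ ω ∈ A, g ω ≤ Y ω) (hYAc : ∀ ω ∉ A, f ω ≤ Y ω) :
    (fun ω => P.real A * g ω + P.real Aᶜ * f ω) ≤ᵐ[P] P[Y|m'] := by
  have hAc : MeasurableSet[mA] Aᶜ := hA.compl
  have hgA := hgi.indicator (hmA _ hA)
  have hfA := hfi.indicator (hmA _ hAc)
  have hle : A.indicator g + Aᶜ.indicator f ≤ Y := fun ω => by
    by_cases h : ω ∈ A <;> simp [h, hYA, hYAc]
  filter_upwards [condExp_add hgA hfA m', condExp_indicator_of_indep hmA hm' hind hA hg hgi,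
    condExp_indicator_of_indep hmA hm' hind hAc hf hfi,
    condExp_mono (hgA.add hfA) hYi (.of_forall hle)] with ω hadd hAg hAf hmono
  rw [← hAg, ← hAf, ← Pi.add_apply, ← hadd]
  exact hmono

end Independence

section Convergence

variable {Ω : Type*} {m : MeasurableSpace Ω} {P : Measure Ω} [IsFiniteMeasure P]

theorem MeasureTheory.Submartingale.ae_tendsto_limitProcess_of_abs_le {ℱ : Filtration ℕ m}
    {f : ℕ → Ω → ℝ} (hf : Submartingale f ℱ P) {C : ℝ} (hC : ∀ n ω, |f n ω| ≤ C) :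
    ∀ᵐ ω ∂P, Tendsto (f · ω) atTop (𝓝 (ℱ.limitProcess f P ω)) :=
  hf.ae_tendsto_limitProcess (R := (P Set.univ).toNNReal * C.toNNReal) fun n => by
    refine (eLpNorm_le_of_ae_bound (.of_forall fun ω => (hC n ω : ‖f n ω‖ ≤ C))).trans ?_
    simp [ENNReal.ofReal, ENNReal.coe_toNNReal (measure_ne_top P _)]

theorem tendsto_integral_of_ae_tendsto_of_abs_le {F : ℕ → Ω → ℝ} {f : Ω → ℝ}
    (hF : ∀ n, AEStronglyMeasurable (F n) P) {C : ℝ} (hC : ∀ n ω, |F n ω| ≤ C)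
    (hlim : ∀ᵐ ω ∂P, Tendsto (F · ω) atTop (𝓝 (f ω))) :
    Tendsto (fun n => ∫ ω, F n ω ∂P) atTop (𝓝 (∫ ω, f ω ∂P)) :=
  tendsto_integral_of_dominated_convergence (fun _ => C) hF (integrable_const C)
    (fun n => .of_forall (hC n)) hlim

theorem ae_eq_zero_or_one_of_integral_mul_one_sub_le {R : ℕ → Ω → ℝ} {r : Ω → ℝ}
    (hRm : ∀ n, AEStronglyMeasurable (R n) P) (hR : ∀ n ω, R n ω ∈ Set.Icc (0 : ℝ) 1)
    (hlim : ∀ᵐ ω ∂P, Tendsto (R · ω) atTop (𝓝 (r ω))) {c : ℝ}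
    (hvar : ∀ n, ∫ ω, R n ω * (1 - R n ω) ∂P ≤ c * ∫ ω, |R (n + 1) ω - R n ω| ∂P) :
    ∀ᵐ ω ∂P, r ω = 0 ∨ r ω = 1 := by
  have hr : ∀ᵐ ω ∂P, r ω ∈ Set.Icc (0 : ℝ) 1 := by
    filter_upwards [hlim] with ω hω
    exact isClosed_Icc.mem_of_tendsto hω (.of_forall fun n => hR n ω)
  have hvar_lim : Tendsto (fun n => ∫ ω, R n ω * (1 - R n ω) ∂P) atTop
      (𝓝 (∫ ω, r ω * (1 - r ω) ∂P)) := by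
    refine tendsto_integral_of_ae_tendsto_of_abs_le (C := 1)
      (fun n => (hRm n).mul (aestronglyMeasurable_const.sub (hRm n))) (fun n ω => ?_) ?_
    · obtain ⟨h0, h1⟩ := hR n ω
      rw [abs_le]; constructor <;> nlinarith
    · filter_upwards [hlim] with ω hω
      exact hω.mul (tendsto_const_nhds.sub hω)
  have hincr_lim : Tendsto (fun n => ∫ ω, |R (n + 1) ω - R n ω| ∂P) atTop (𝓝 0) := by
    have := tendsto_integral_of_ae_tendsto_of_abs_le (F := fun n ω => |R (n + 1) ω - R n ω|)
      (f := fun _ => 0) (C := 1) (fun n => ((hRm (n + 1)).sub (hRm n)).norm) (fun n ω => ?_) ?_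
    · simpa using this
    · obtain ⟨h0, h1⟩ := hR n ω
      obtain ⟨h0', h1'⟩ := hR (n + 1) ω
      rw [abs_abs, abs_le]; constructor <;> linarith
    · filter_upwards [hlim] with ω hω
      simpa using ((hω.comp (tendsto_add_atTop_nat 1)).sub hω).abs
  have hnonneg : 0 ≤ᵐ[P] fun ω => r ω * (1 - r ω) := by
    filter_upwards [hr] with ω hω
    exact mul_nonneg hω.1 (sub_nonneg.2 hω.2)
  have hzero : ∫ ω, r ω * (1 - r ω) ∂P = 0 :=
    le_antisymm (le_of_tendsto_of_tendsto' hvar_lim (by simpa using hincr_lim.const_mul c) hvar)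
      (integral_nonneg_of_ae hnonneg)
  have hrm : AEStronglyMeasurable r P := aestronglyMeasurable_of_tendsto_ae atTop hRm hlim
  have hint : Integrable (fun ω => r ω * (1 - r ω)) P := by
    refine .of_bound (hrm.mul (aestronglyMeasurable_const.sub hrm)) 1 ?_
    filter_upwards [hr] with ω ⟨h0, h1⟩
    rw [Real.norm_eq_abs, abs_le]; constructor <;> nlinarith
  filter_upwards [(integral_eq_zero_iff_of_nonneg_ae hnonneg hint).1 hzero] with ω hω
  rcases mul_eq_zero.1 hω with h | h
  · exact .inl h
  · exact .inr (sub_eq_zero.1 h).symm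

end Convergence

section PolarizationStep

variable {Ω : Type*} {mA m' m : MeasurableSpace Ω} {P : Measure Ω} [IsProbabilityMeasure P]
  {A : Set Ω} {x y : Ω → ℝ}

theorem le_condExp_of_polarization_step (hmA : mA ≤ m) (hm' : m' ≤ m) (hind : Indep mA m' P)
    (hA : MeasurableSet[mA] A) (hPA : P.real A = 1 / 2) (hx : StronglyMeasurable[m'] x)
    (hx01 : ∀ ω, x ω ∈ Set.Icc (0 : ℝ) 1) (hyi : Integrable y P)
    (hminus : ∀ ω ∉ A, y ω = 2 * x ω - x ω ^ 2) (hplus : ∀ ω ∈ A, x ω ^ 2 ≤ y ω) :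
    x ≤ᵐ[P] P[y|m'] := by
  have hPAc : P.real Aᶜ = 1 / 2 := by
    rw [probReal_compl_eq_one_sub (hmA _ hA), hPA]; norm_num
  have hf : StronglyMeasurable[m'] fun ω => 2 * x ω - x ω ^ 2 := (hx.const_mul 2).sub (hx.pow 2)
  have hfi : Integrable (fun ω => 2 * x ω - x ω ^ 2) P :=
    .of_mem_Icc 0 1 (hf.mono hm').measurable.aemeasurable (.of_forall fun ω => by
      obtain ⟨h0, h1⟩ := hx01 ω; constructor <;> nlinarith)
  have hgi : Integrable (fun ω => x ω ^ 2) P :=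
    .of_mem_Icc 0 1 ((hx.pow 2).mono hm').measurable.aemeasurable (.of_forall fun ω => by
      obtain ⟨h0, h1⟩ := hx01 ω; constructor <;> nlinarith)
  filter_upwards [le_condExp_of_indep_cases hmA hm' hind hA (g := fun ω => x ω ^ 2) hf (hx.pow 2)
    hfi hgi hyi hplus fun ω h => (hminus ω h).ge] with ω hω
  rw [hPA, hPAc] at hω
  linarith

theorem integral_mul_one_sub_le_of_polarization_step_s14 (hmA : mA ≤ m) (hm' : m' ≤ m)
    (hind : Indep mA m' P) (hA : MeasurableSet[mA] A) (hPA : P.real A = 1 / 2)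
    (hx : StronglyMeasurable[m'] x) (hx01 : ∀ ω, x ω ∈ Set.Icc (0 : ℝ) 1) (hyi : Integrable y P)
    (hminus : ∀ ω ∉ A, y ω = 2 * x ω - x ω ^ 2) :
    ∫ ω, x ω * (1 - x ω) ∂P ≤ 2 * ∫ ω, |y ω - x ω| ∂P := by
  have hPAc : P.real Aᶜ = 1 / 2 := by
    rw [probReal_compl_eq_one_sub (hmA _ hA), hPA]; norm_num
  have hv : StronglyMeasurable[m'] fun ω => x ω * (1 - x ω) :=
    hx.mul (stronglyMeasurable_const.sub hx)
  have hvi : Integrable (fun ω => x ω * (1 - x ω)) P :=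
    .of_mem_Icc 0 1 (hv.mono hm').measurable.aemeasurable (.of_forall fun ω => by
      obtain ⟨h0, h1⟩ := hx01 ω; constructor <;> nlinarith)
  have hxi : Integrable x P :=
    .of_mem_Icc 0 1 (hx.mono hm').measurable.aemeasurable (.of_forall hx01)
  calc ∫ ω, x ω * (1 - x ω) ∂P
      = 2 * ∫ ω, Aᶜ.indicator (fun ω => x ω * (1 - x ω)) ω ∂P := by
        rw [integral_indicator_of_indep hmA hm' hind hA.compl hv hvi, hPAc]; ring
    _ ≤ 2 * ∫ ω, |y ω - x ω| ∂P := by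
        refine mul_le_mul_of_nonneg_left (integral_mono (hvi.indicator (hmA _ hA.compl))
          (hyi.sub hxi).abs fun ω => ?_) zero_le_two
        by_cases h : ω ∈ A
        · simp [h]
        · simp only [Set.indicator_of_mem (Set.mem_compl h), hminus ω h]
          exact (le_abs_self _).trans_eq' (by ring)

end PolarizationStep

/-- The process `R_n = P[L_n = 1] ∈ [0,1]` with `R_{n+1} = 2R_n − R_n²` w.p. `1/2` and
`R_{n+1} ≥ R_n²` w.p. `1/2` is a bounded submartingale converging a.s. to `{0,1}`. -/
theorem R_process_polarizes
    {Ω : Type*} {m : MeasurableSpace Ω} (P : Measure Ω) [IsProbabilityMeasure P]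
    (F : Filtration ℕ m) (R : ℕ → Ω → ℝ)
    (hadapted : Adapted F R)
    (hbound : ∀ n ω, R n ω ∈ Set.Icc (0 : ℝ) 1)
    (B : ℕ → Ω → Bool) (hBmeas : ∀ n, Measurable (B n))
    (hBhalf : ∀ n, P {ω | B n ω = true} = 1 / 2)
    (hBindep : ∀ n, Indep (MeasurableSpace.comap (B n) ⊤) (F n) P)
    (hminus : ∀ n ω, B n ω = false → R (n + 1) ω = 2 * R n ω - (R n ω) ^ 2)
    (hplus : ∀ n ω, B n ω = true → (R n ω) ^ 2 ≤ R (n + 1) ω) :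
    Submartingale R F P ∧
      ∀ᵐ ω ∂P, ∃ r : ℝ,
        Tendsto (fun n => R n ω) atTop (nhds r) ∧ (r = 0 ∨ r = 1) := by
  have hRsm : ∀ n, StronglyMeasurable[F n] (R n) := fun n => (hadapted n).stronglyMeasurable
  have hRm : ∀ n, StronglyMeasurable[m] (R n) := fun n => (hRsm n).mono (F.le n)
  have hRi : ∀ n, Integrable (R n) P := fun n =>
    .of_mem_Icc 0 1 (hRm n).measurable.aemeasurable (.of_forall (hbound n))
  have hBle : ∀ n, MeasurableSpace.comap (B n) ⊤ ≤ m := fun n => (hBmeas n).comap_le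
  have hA : ∀ n, MeasurableSet[MeasurableSpace.comap (B n) ⊤] {ω | B n ω = true} :=
    fun n => ⟨{true}, trivial, rfl⟩
  have hPA : ∀ n, P.real {ω | B n ω = true} = 1 / 2 := by simp [measureReal_def, hBhalf]
  have hminus' : ∀ n, ∀ ω ∉ {ω | B n ω = true}, R (n + 1) ω = 2 * R n ω - R n ω ^ 2 :=
    fun n ω h => hminus n ω (by simpa using h)
  have hsub : Submartingale R F P :=
    submartingale_nat hadapted.stronglyAdapted hRi fun n =>
      le_condExp_of_polarization_step (hBle n) (F.le n) (hBindep n) (hA n) (hPA n) (hRsm n)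
        (hbound n) (hRi (n + 1)) (hminus' n) (hplus n)
  have hvar : ∀ n, ∫ ω, R n ω * (1 - R n ω) ∂P ≤ 2 * ∫ ω, |R (n + 1) ω - R n ω| ∂P := fun n =>
    integral_mul_one_sub_le_of_polarization_step_s14 (hBle n) (F.le n) (hBindep n) (hA n) (hPA n)
      (hRsm n) (hbound n) (hRi (n + 1)) (hminus' n)
  have hlim := hsub.ae_tendsto_limitProcess_of_abs_le (C := 1) fun n ω =>
    abs_le.2 ⟨by linarith [(hbound n ω).1], (hbound n ω).2⟩
  refine ⟨hsub, ?_⟩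
  filter_upwards [hlim, ae_eq_zero_or_one_of_integral_mul_one_sub_le
    (fun n => (hRm n).aestronglyMeasurable) hbound hlim hvar] with ω hω h01
  exact ⟨_, hω, h01⟩
end
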